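/- arXiv:1702.01436 — 6 statements merged into one kernel-verified Lean document; each statement's English description precedes it below -/
import Mathlib

section
/- For all subsets A, B of a finite alphabet R with a ∈ A ∩ B and |A| = |B|, the minimum number of leaves of the fully bifurcating tree T_k that must be assigned state a in order for the Fitch root state set to equal A is the same as for B; that is, f_{k,r}^A = f_{k,r}^B. -/
open Finset

/-- Fitch's parsimony operation: intersection if nonempty, otherwise union. -/
def fitchOp {α : Type*} [DecidableEq α] (B C : Finset α) : Finset α :=
  if (B ∩ C).Nonempty then B ∩ C else B ∪ C

/-- `fCS a R k A` is `f_{k,r}^A`: the minimum number of leaves of the fully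
bifurcating tree `T_k` that must be assigned state `a` in order for the Fitch
root state set to equal `A`, defined by the standard-decomposition recursion,
with base case `f_{0,r}^{{x}} = 1` if `x = a` and `0` otherwise. -/
noncomputable def fCS {α : Type*} [DecidableEq α] (a : α) (R : Finset α) :
    ℕ → Finset α → ℕ
  | 0, A => if a ∈ A then 1 else 0
  | (k+1), A => sInf {n : ℕ | ∃ B C : Finset α, B ⊆ R ∧ C ⊆ R ∧
      B.Nonempty ∧ C.Nonempty ∧ B.card ≤ 2 ^ k ∧ C.card ≤ 2 ^ k ∧
      fitchOp B C = A ∧ n = fCS a R k B + fCS a R k C}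

lemma exists_perm {α : Type*} [DecidableEq α] {a : α} {R A B : Finset α}
    (hA : A ⊆ R) (hB : B ⊆ R) (haA : a ∈ A) (haB : a ∈ B)
    (hcard : A.card = B.card) :
    ∃ e : Equiv.Perm α, e a = a ∧ A.image e = B ∧ R.image e = R := by
  classical
  have h1 : (A \ {a}).card = (B \ {a}).card := by
    rw [card_sdiff_of_subset (singleton_subset_iff.mpr haA),
      card_sdiff_of_subset (singleton_subset_iff.mpr haB), hcard]
  have h2 : (R \ A).card = (R \ B).card := by
    rw [card_sdiff_of_subset hA, card_sdiff_of_subset hB, hcard]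
  let e₁ := Finset.equivOfCardEq h1
  let e₂ := Finset.equivOfCardEq h2
  let f : α → α := fun x =>
    if h : x ∈ A \ {a} then (e₁ ⟨x, h⟩ : α)
    else if h : x ∈ R \ A then (e₂ ⟨x, h⟩ : α) else x
  let g : α → α := fun x =>
    if h : x ∈ B \ {a} then (e₁.symm ⟨x, h⟩ : α)
    else if h : x ∈ R \ B then (e₂.symm ⟨x, h⟩ : α) else x
  have f1 : ∀ x (h : x ∈ A \ {a}), f x = (e₁ ⟨x, h⟩ : α) := fun x h => dif_pos h
  have f2 : ∀ x (h : x ∉ A \ {a}) (h' : x ∈ R \ A), f x = (e₂ ⟨x, h'⟩ : α) :=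
    fun x h h' => (dif_neg h).trans (dif_pos h')
  have f3 : ∀ x (h : x ∉ A \ {a}) (h' : x ∉ R \ A), f x = x :=
    fun x h h' => (dif_neg h).trans (dif_neg h')
  have g1 : ∀ x (h : x ∈ B \ {a}), g x = (e₁.symm ⟨x, h⟩ : α) := fun x h => dif_pos h
  have g2 : ∀ x (h : x ∉ B \ {a}) (h' : x ∈ R \ B), g x = (e₂.symm ⟨x, h'⟩ : α) :=
    fun x h h' => (dif_neg h).trans (dif_pos h')
  have g3 : ∀ x (h : x ∉ B \ {a}) (h' : x ∉ R \ B), g x = x :=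
    fun x h h' => (dif_neg h).trans (dif_neg h')
  have key : ∀ x, g (f x) = x := by
    intro x
    by_cases h : x ∈ A \ {a}
    · have hy : (e₁ ⟨x, h⟩ : α) ∈ B \ {a} := (e₁ ⟨x, h⟩).2
      rw [f1 x h, g1 _ hy]
      simp
    · by_cases h' : x ∈ R \ A
      · have hy : (e₂ ⟨x, h'⟩ : α) ∈ R \ B := (e₂ ⟨x, h'⟩).2
        have hy' : (e₂ ⟨x, h'⟩ : α) ∉ B \ {a} := fun hc =>
          (mem_sdiff.mp hy).2 (mem_sdiff.mp hc).1
        rw [f2 x h h', g2 _ hy' hy]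
        simp
      · have hx1 : x ∉ B \ {a} := by
          intro hc
          rcases mem_sdiff.mp hc with ⟨hxB, hxa⟩
          have hxA : x ∈ A := by
            by_contra hxA
            exact h' (mem_sdiff.mpr ⟨hB hxB, hxA⟩)
          exact h (mem_sdiff.mpr ⟨hxA, hxa⟩)
        have hx2 : x ∉ R \ B := by
          intro hc
          rcases mem_sdiff.mp hc with ⟨hxR, hxB⟩
          have hxA : x ∈ A := by
            by_contra hxA
            exact h' (mem_sdiff.mpr ⟨hxR, hxA⟩)
          have hxa : x = a := by
            by_contra hxa
            exact h (mem_sdiff.mpr ⟨hxA, by simpa using hxa⟩)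
          exact hxB (hxa ▸ haB)
        rw [f3 x h h', g3 x hx1 hx2]
  have key' : ∀ x, f (g x) = x := by
    intro x
    by_cases h : x ∈ B \ {a}
    · have hy : (e₁.symm ⟨x, h⟩ : α) ∈ A \ {a} := (e₁.symm ⟨x, h⟩).2
      rw [g1 x h, f1 _ hy]
      simp
    · by_cases h' : x ∈ R \ B
      · have hy : (e₂.symm ⟨x, h'⟩ : α) ∈ R \ A := (e₂.symm ⟨x, h'⟩).2
        have hy' : (e₂.symm ⟨x, h'⟩ : α) ∉ A \ {a} := fun hc =>
          (mem_sdiff.mp hy).2 (mem_sdiff.mp hc).1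
        rw [g2 x h h', f2 _ hy' hy]
        simp
      · have hx1 : x ∉ A \ {a} := by
          intro hc
          rcases mem_sdiff.mp hc with ⟨hxA, hxa⟩
          have hxB : x ∈ B := by
            by_contra hxB
            exact h' (mem_sdiff.mpr ⟨hA hxA, hxB⟩)
          exact h (mem_sdiff.mpr ⟨hxB, hxa⟩)
        have hx2 : x ∉ R \ A := by
          intro hc
          rcases mem_sdiff.mp hc with ⟨hxR, hxA⟩
          have hxB : x ∈ B := by
            by_contra hxB
            exact h' (mem_sdiff.mpr ⟨hxR, hxB⟩)
          have hxa : x = a := by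
            by_contra hxa
            exact h (mem_sdiff.mpr ⟨hxB, by simpa using hxa⟩)
          exact hxA (hxa ▸ haA)
        rw [g3 x h h', f3 x hx1 hx2]
  have hfa : f a = a := f3 a (by simp) (by simp [haA])
  refine ⟨⟨f, g, key, key'⟩, hfa, ?_, ?_⟩
  · -- A.image f = B
    ext y
    simp only [mem_image, Equiv.coe_fn_mk]
    constructor
    · rintro ⟨x, hx, rfl⟩
      by_cases hxa : x = a
      · subst hxa; rw [hfa]; exact haB
      · have h : x ∈ A \ {a} := mem_sdiff.mpr ⟨hx, by simpa using hxa⟩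
        rw [f1 x h]
        exact (mem_sdiff.mp (e₁ ⟨x, h⟩).2).1
    · intro hy
      by_cases hya : y = a
      · exact ⟨a, haA, hya ▸ hfa⟩
      · have h : y ∈ B \ {a} := mem_sdiff.mpr ⟨hy, by simpa using hya⟩
        refine ⟨g y, ?_, key' y⟩
        rw [g1 y h]
        exact (mem_sdiff.mp (e₁.symm ⟨y, h⟩).2).1
  · -- R.image f = R
    ext y
    simp only [mem_image, Equiv.coe_fn_mk]
    constructor
    · rintro ⟨x, hx, rfl⟩
      by_cases h : x ∈ A \ {a}
      · rw [f1 x h]; exact hB (mem_sdiff.mp (e₁ ⟨x, h⟩).2).1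
      · by_cases h' : x ∈ R \ A
        · rw [f2 x h h']; exact (mem_sdiff.mp (e₂ ⟨x, h'⟩).2).1
        · rw [f3 x h h']; exact hx
    · intro hy
      refine ⟨g y, ?_, key' y⟩
      by_cases h : y ∈ B \ {a}
      · rw [g1 y h]; exact hA (mem_sdiff.mp (e₁.symm ⟨y, h⟩).2).1
      · by_cases h' : y ∈ R \ B
        · rw [g2 y h h']; exact (mem_sdiff.mp (e₂.symm ⟨y, h'⟩).2).1
        · rw [g3 y h h']; exact hy

lemma fitchOp_image {α : Type*} [DecidableEq α] (e : Equiv.Perm α) (s t : Finset α) :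
    fitchOp (s.image e) (t.image e) = (fitchOp s t).image e := by
  unfold fitchOp
  rw [← Finset.image_inter _ _ e.injective]
  by_cases h : (s ∩ t).Nonempty
  · simp [h, Finset.image_nonempty]
  · simp [h, Finset.image_nonempty, Finset.image_union]

lemma image_symm_R {α : Type*} [DecidableEq α] (e : Equiv.Perm α) {R : Finset α}
    (hR : R.image e = R) : R.image e.symm = R := by
  conv_lhs => rw [← hR]
  rw [Finset.image_image]
  simp

lemma fCS_image {α : Type*} [DecidableEq α] (a : α) (R : Finset α) :
    ∀ (k : ℕ) (e : Equiv.Perm α), e a = a → R.image e = R →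
      ∀ A : Finset α, fCS a R k (A.image e) = fCS a R k A := by
  intro k
  induction k with
  | zero =>
    intro e ha hR A
    have : a ∈ A.image e ↔ a ∈ A := by
      constructor
      · intro h
        rcases Finset.mem_image.mp h with ⟨x, hx, hxa⟩
        have : x = a := by
          have := e.injective (hxa.trans ha.symm)
          exact this
        exact this ▸ hx
      · intro h
        exact Finset.mem_image.mpr ⟨a, h, ha⟩
    simp [fCS, this]
  | succ k ih =>
    have incl : ∀ (e : Equiv.Perm α), e a = a → R.image e = R → ∀ A : Finset α,
        {n : ℕ | ∃ B C : Finset α, B ⊆ R ∧ C ⊆ R ∧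
          B.Nonempty ∧ C.Nonempty ∧ B.card ≤ 2 ^ k ∧ C.card ≤ 2 ^ k ∧
          fitchOp B C = A ∧ n = fCS a R k B + fCS a R k C} ⊆
        {n : ℕ | ∃ B C : Finset α, B ⊆ R ∧ C ⊆ R ∧
          B.Nonempty ∧ C.Nonempty ∧ B.card ≤ 2 ^ k ∧ C.card ≤ 2 ^ k ∧
          fitchOp B C = A.image e ∧ n = fCS a R k B + fCS a R k C} := by
      intro e ha hR A n hn
      obtain ⟨B, C, hBR, hCR, hBne, hCne, hBc, hCc, hop, hval⟩ := hn
      refine ⟨B.image e, C.image e, ?_, ?_, ?_, ?_, ?_, ?_, ?_, ?_⟩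
      · calc B.image e ⊆ R.image e := Finset.image_subset_image hBR
          _ = R := hR
      · calc C.image e ⊆ R.image e := Finset.image_subset_image hCR
          _ = R := hR
      · simpa [Finset.image_nonempty] using hBne
      · simpa [Finset.image_nonempty] using hCne
      · rwa [Finset.card_image_of_injective _ e.injective]
      · rwa [Finset.card_image_of_injective _ e.injective]
      · rw [fitchOp_image, hop]
      · rw [ih e ha hR B, ih e ha hR C]; exact hval
    intro e ha hR A
    show sInf _ = sInf _
    congr 1
    apply Set.Subset.antisymm
    · intro n hn
      have h2 := incl e.symm (by rw [Equiv.symm_apply_eq, ha]) (image_symm_R e hR) (A.image e) hn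
      have : (A.image e).image e.symm = A := by
        rw [Finset.image_image]; simp
      rwa [this] at h2
    · exact incl e ha hR A

/-- f_{k,r}^A depends only on |A| for sets containing a. -/
theorem stmt_0 {α : Type*} [DecidableEq α] (a : α) (R : Finset α)
    (hr : 2 ≤ R.card) (haR : a ∈ R) (k : ℕ) (A B : Finset α)
    (hA : A ⊆ R) (hB : B ⊆ R) (haA : a ∈ A) (haB : a ∈ B)
    (hcard : A.card = B.card) :
    fCS a R k A = fCS a R k B := by
  obtain ⟨e, ha, hAB, hR⟩ := exists_perm hA hB haA haB hcard
  rw [← hAB]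
  exact (fCS_image a R k e ha hR A).symm
end

section
/- Monotonicity in the target set: for all k ≥ 1 and all subsets A, B of R with a ∈ A ∩ B and |A| ≥ |B|, we have f_{k,r}^A ≤ f_{k,r}^B. That is, obtaining a smaller Fitch root state set containing a requires at least as many leaves in state a. -/
open Finset

section aux
variable {α : Type*} [DecidableEq α]

lemma fitchOp_of_inter {B C : Finset α} (h : (B ∩ C).Nonempty) : fitchOp B C = B ∩ C :=
  if_pos h

lemma fitchOp_sdiff {A A1 : Finset α} (h : A1 ⊆ A) : fitchOp A1 (A \ A1) = A := by
  rw [fitchOp, if_neg (by simp [Finset.inter_sdiff_self]), union_sdiff_of_subset h]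

lemma fCS_le_decomp (a : α) (R : Finset α) {k : ℕ} {A B C : Finset α}
    (hBR : B ⊆ R) (hCR : C ⊆ R) (hBne : B.Nonempty) (hCne : C.Nonempty)
    (hBk : B.card ≤ 2 ^ k) (hCk : C.card ≤ 2 ^ k) (hop : fitchOp B C = A) :
    fCS a R (k+1) A ≤ fCS a R k B + fCS a R k C :=
  Nat.sInf_le ⟨B, C, hBR, hCR, hBne, hCne, hBk, hCk, hop, rfl⟩

lemma exists_subset_mem {a : α} {A : Finset α} (haA : a ∈ A) {s : ℕ}
    (h1 : 1 ≤ s) (h2 : s ≤ A.card) : ∃ A1, A1 ⊆ A ∧ a ∈ A1 ∧ A1.card = s := by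
  obtain ⟨t, ht, htc⟩ := Finset.exists_subset_card_eq
    (show s - 1 ≤ (A.erase a).card by rw [card_erase_of_mem haA]; omega)
  refine ⟨insert a t, ?_, mem_insert_self _ _, ?_⟩
  · intro x hx
    rcases mem_insert.1 hx with rfl | hx
    · exact haA
    · exact (erase_subset _ _) (ht hx)
  · rw [card_insert_of_notMem (fun h => (mem_erase.1 (ht h)).1 rfl), htc]; omega

lemma fCS_zero (a : α) (R : Finset α) :
    ∀ (k : ℕ) (A : Finset α), A.Nonempty → A ⊆ R → a ∉ A → A.card ≤ 2 ^ k →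
      fCS a R k A = 0 := by
  intro k
  induction k with
  | zero => intro A _ _ ha _; simp [fCS, ha]
  | succ k ih =>
    intro A hne hAR ha hAk
    have h2k : 0 < 2 ^ k := Nat.pow_pos (by norm_num)
    have hpow : 2 ^ (k+1) = 2 * 2 ^ k := by ring
    refine Nat.le_antisymm ?_ (Nat.zero_le _)
    by_cases h : A.card ≤ 2 ^ k
    · have hle := fCS_le_decomp a R (k := k) (A := A) hAR hAR hne hne h h (by simp [fitchOp])
      rwa [ih A hne hAR ha h] at hle
    · obtain ⟨A1, hA1A, hA1c⟩ := A.exists_subset_card_eq (show 2 ^ k ≤ A.card by omega)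
      have hcA2 : (A \ A1).card = A.card - 2 ^ k := by rw [card_sdiff_of_subset hA1A, hA1c]
      have hle := fCS_le_decomp a R (k := k) (A := A) (hA1A.trans hAR) (sdiff_subset.trans hAR)
        (card_pos.1 (by omega)) (card_pos.1 (by omega)) (le_of_eq hA1c)
        (by omega) (fitchOp_sdiff hA1A)
      rw [ih A1 (card_pos.1 (by omega)) (hA1A.trans hAR) (fun h' => ha (hA1A h')) (le_of_eq hA1c),
        ih (A \ A1) (card_pos.1 (by omega)) (sdiff_subset.trans hAR)
          (fun h' => ha (sdiff_subset h')) (by omega)] at hle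
      omega

lemma fCS_succ_exists (a : α) (R : Finset α) {k : ℕ} {B : Finset α}
    (hBR : B ⊆ R) (hBne : B.Nonempty) (hBk : B.card ≤ 2 ^ (k+1)) :
    ∃ B1 B2 : Finset α, B1 ⊆ R ∧ B2 ⊆ R ∧ B1.Nonempty ∧ B2.Nonempty ∧
      B1.card ≤ 2 ^ k ∧ B2.card ≤ 2 ^ k ∧ fitchOp B1 B2 = B ∧
      fCS a R (k+1) B = fCS a R k B1 + fCS a R k B2 := by
  have h2k : 0 < 2 ^ k := Nat.pow_pos (by norm_num)
  have hpow : 2 ^ (k+1) = 2 * 2 ^ k := by ring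
  have hSne : Set.Nonempty {n : ℕ | ∃ B1 C : Finset α, B1 ⊆ R ∧ C ⊆ R ∧
      B1.Nonempty ∧ C.Nonempty ∧ B1.card ≤ 2 ^ k ∧ C.card ≤ 2 ^ k ∧
      fitchOp B1 C = B ∧ n = fCS a R k B1 + fCS a R k C} := by
    by_cases h : B.card ≤ 2 ^ k
    · exact ⟨_, B, B, hBR, hBR, hBne, hBne, h, h, by simp [fitchOp], rfl⟩
    · obtain ⟨B1, hB1B, hB1c⟩ := B.exists_subset_card_eq (show 2 ^ k ≤ B.card by omega)
      have hcB2 : (B \ B1).card = B.card - 2 ^ k := by rw [card_sdiff_of_subset hB1B, hB1c]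
      exact ⟨_, B1, B \ B1, hB1B.trans hBR, (sdiff_subset).trans hBR,
        card_pos.1 (by omega), card_pos.1 (by omega), le_of_eq hB1c, by omega,
        fitchOp_sdiff hB1B, rfl⟩
  have hmem := Nat.sInf_mem hSne
  obtain ⟨B1, B2, h1, h2, h3, h4, h5, h6, h7, h8⟩ := hmem
  exact ⟨B1, B2, h1, h2, h3, h4, h5, h6, h7, h8⟩

lemma step_union (a : α) (R : Finset α) {k : ℕ}
    (IH : ∀ A B : Finset α, A ⊆ R → B ⊆ R → a ∈ A → a ∈ B → B.card ≤ A.card →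
      A.card ≤ 2 ^ k → B.card ≤ 2 ^ k → fCS a R k A ≤ fCS a R k B)
    {A B1 : Finset α} (hAR : A ⊆ R) (haA : a ∈ A) (hAk : A.card ≤ 2 ^ (k+1))
    (hB1R : B1 ⊆ R) (haB1 : a ∈ B1) (hB1k : B1.card ≤ 2 ^ k)
    (hlt : B1.card < A.card) :
    fCS a R (k+1) A ≤ fCS a R k B1 := by
  have h2k : 0 < 2 ^ k := Nat.pow_pos (by norm_num)
  have hpow : 2 ^ (k+1) = 2 * 2 ^ k := by ring
  have hB1pos : 0 < B1.card := card_pos.2 ⟨a, haB1⟩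
  set s := max B1.card (A.card - 2 ^ k) with hs
  obtain ⟨A1, hA1A, haA1, hA1c⟩ := exists_subset_mem haA (show 1 ≤ s by omega)
    (show s ≤ A.card by omega)
  have hcA2 : (A \ A1).card = A.card - s := by rw [card_sdiff_of_subset hA1A, hA1c]
  have hA2ne : (A \ A1).Nonempty := card_pos.1 (by omega)
  have hle := fCS_le_decomp a R (k := k) (A := A) (hA1A.trans hAR) (sdiff_subset.trans hAR)
    ⟨a, haA1⟩ hA2ne (by omega) (by omega) (fitchOp_sdiff hA1A)
  rw [fCS_zero a R k (A \ A1) hA2ne (sdiff_subset.trans hAR)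
    (fun h => (mem_sdiff.1 h).2 haA1) (by omega)] at hle
  calc fCS a R (k+1) A ≤ fCS a R k A1 + 0 := hle
    _ = fCS a R k A1 := by omega
    _ ≤ fCS a R k B1 := IH A1 B1 (hA1A.trans hAR) hB1R haA1 haB1 (by omega) (by omega) hB1k

lemma mono_aux (a : α) (R : Finset α) :
    ∀ (k : ℕ) (A B : Finset α), A ⊆ R → B ⊆ R → a ∈ A → a ∈ B → B.card ≤ A.card →
      A.card ≤ 2 ^ k → B.card ≤ 2 ^ k → fCS a R k A ≤ fCS a R k B := by
  intro k
  induction k with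
  | zero => intro A B _ _ haA haB _ _ _; simp [fCS, haA, haB]
  | succ k ih =>
    intro A B hAR hBR haA haB hcard hAk hBk
    have h2k : 0 < 2 ^ k := Nat.pow_pos (by norm_num)
    have hpow : 2 ^ (k+1) = 2 * 2 ^ k := by ring
    obtain ⟨B1, B2, hB1R, hB2R, hB1ne, hB2ne, hB1k, hB2k, hop, heq⟩ :=
      fCS_succ_exists a R hBR ⟨a, haB⟩ hBk
    rw [heq]
    by_cases hint : (B1 ∩ B2).Nonempty
    · -- intersection case
      have hBeq : B1 ∩ B2 = B := by rwa [fitchOp_of_inter hint] at hop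
      have haB12 : a ∈ B1 ∩ B2 := by rw [hBeq]; exact haB
      have haB1 : a ∈ B1 := (mem_inter.1 haB12).1
      have haB2 : a ∈ B2 := (mem_inter.1 haB12).2
      by_cases hA2k : A.card ≤ 2 ^ k
      · -- pad A on both sides
        have hsum : B1.card + B2.card ≤ R.card + A.card := by
          have h1 := Finset.card_inter_add_card_union B1 B2
          have h2 : (B1 ∪ B2).card ≤ R.card := card_le_card (union_subset hB1R hB2R)
          have h3 : (B1 ∩ B2).card ≤ A.card := by rw [hBeq]; exact hcard
          omega
        have hRA : (R \ A).card = R.card - A.card := card_sdiff_of_subset hAR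
        have hB1le : B1.card ≤ R.card := card_le_card hB1R
        have hB2le : B2.card ≤ R.card := card_le_card hB2R
        have hApos : 0 < A.card := card_pos.2 ⟨a, haA⟩
        have hAcard : A.card ≤ R.card := card_le_card hAR
        obtain ⟨E1, hE1, hE1c⟩ := (R \ A).exists_subset_card_eq
          (show B1.card - A.card ≤ (R \ A).card by omega)
        have hE1c' : ((R \ A) \ E1).card = (R \ A).card - (B1.card - A.card) := by
          rw [card_sdiff_of_subset hE1, hE1c]
        obtain ⟨E2, hE2, hE2c⟩ := ((R \ A) \ E1).exists_subset_card_eq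
          (show B2.card - A.card ≤ ((R \ A) \ E1).card by omega)
        have hE1A : ∀ x ∈ E1, x ∉ A := fun x hx => (mem_sdiff.1 (hE1 hx)).2
        have hE2A : ∀ x ∈ E2, x ∉ A := fun x hx => (mem_sdiff.1 (mem_sdiff.1 (hE2 hx)).1).2
        have hE12 : ∀ x ∈ E2, x ∉ E1 := fun x hx => (mem_sdiff.1 (hE2 hx)).2
        have hA1A2 : (A ∪ E1) ∩ (A ∪ E2) = A := by
          ext x
          simp only [mem_inter, mem_union]
          constructor
          · rintro ⟨h1 | h1, h2 | h2⟩
            exacts [h1, h1, h2, absurd h1 (hE12 x h2)]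
          · intro h; exact ⟨Or.inl h, Or.inl h⟩
        have hdA1 : Disjoint A E1 := disjoint_left.2 fun x hx hx1 => hE1A x hx1 hx
        have hdA2 : Disjoint A E2 := disjoint_left.2 fun x hx hx2 => hE2A x hx2 hx
        have hA1card : (A ∪ E1).card = A.card + (B1.card - A.card) := by
          rw [card_union_of_disjoint hdA1, hE1c]
        have hA2card : (A ∪ E2).card = A.card + (B2.card - A.card) := by
          rw [card_union_of_disjoint hdA2, hE2c]
        have hle := fCS_le_decomp a R (k := k) (A := A) (union_subset hAR (hE1.trans sdiff_subset))
          (union_subset hAR ((hE2.trans sdiff_subset).trans sdiff_subset))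
          ⟨a, mem_union_left _ haA⟩ ⟨a, mem_union_left _ haA⟩
          (by omega) (by omega)
          (by rw [fitchOp_of_inter (by rw [hA1A2]; exact ⟨a, haA⟩)]; exact hA1A2)
        refine hle.trans (add_le_add ?_ ?_)
        · exact ih (A ∪ E1) B1 (union_subset hAR (hE1.trans sdiff_subset)) hB1R
            (mem_union_left _ haA) haB1 (by omega) (by omega) hB1k
        · exact ih (A ∪ E2) B2
            (union_subset hAR ((hE2.trans sdiff_subset).trans sdiff_subset)) hB2R
            (mem_union_left _ haA) haB2 (by omega) (by omega) hB2k
      · -- A is big: split A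
        have := step_union a R ih hAR haA hAk hB1R haB1 hB1k (by omega)
        omega
    · -- union case
      have hBeq : B1 ∪ B2 = B := by rwa [fitchOp, if_neg hint] at hop
      have hd : Disjoint B1 B2 :=
        disjoint_iff_inter_eq_empty.2 (not_nonempty_iff_eq_empty.1 hint)
      have hBcard : B1.card + B2.card = B.card := by
        rw [← card_union_of_disjoint hd, hBeq]
      have hB1pos : 0 < B1.card := card_pos.2 hB1ne
      have hB2pos : 0 < B2.card := card_pos.2 hB2ne
      have haB12 : a ∈ B1 ∪ B2 := by rw [hBeq]; exact haB
      rcases mem_union.1 haB12 with haB1 | haB2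
      · have := step_union a R ih hAR haA hAk hB1R haB1 hB1k (by omega)
        omega
      · have := step_union a R ih hAR haA hAk hB2R haB2 hB2k (by omega)
        omega

end aux

/-- monotonicity in the target set: a smaller root set containing
a requires at least as many leaves in state a. -/
theorem stmt_3 {α : Type*} [DecidableEq α] (a : α) (R : Finset α)
    (hr : 2 ≤ R.card) (haR : a ∈ R) (k : ℕ) (hk : 1 ≤ k)
    (A B : Finset α) (hA : A ⊆ R) (hB : B ⊆ R) (haA : a ∈ A) (haB : a ∈ B)
    (hcard : B.card ≤ A.card) (hAk : A.card ≤ 2 ^ k) (hBk : B.card ≤ 2 ^ k) :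
    fCS a R k A ≤ fCS a R k B :=
  mono_aux a R k A B hA hB haA haB hcard hAk hBk
end

section
/- Monotonicity in tree height: for all k and all A ⊆ R containing a (in the domain where both quantities are defined, i.e. |A| ≤ 2^k), we have f_{k,r}^A ≤ f_{k+1,r}^A. -/
open Finset

namespace FitchAux

variable {α : Type*} [DecidableEq α]

lemma fitchOp_subset_union (B C : Finset α) : fitchOp B C ⊆ B ∪ C := by
  unfold fitchOp
  split
  · exact inter_subset_union
  · exact subset_rfl

lemma fitchOp_self {A : Finset α} (h : A.Nonempty) : fitchOp A A = A := by
  simp [fitchOp, h]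

lemma fitchOp_of_inter_empty {B C : Finset α} (h : B ∩ C = ∅) :
    fitchOp B C = B ∪ C := by
  simp [fitchOp, h]

lemma fCS_succ (a : α) (R : Finset α) (k : ℕ) (A : Finset α) :
    fCS a R (k+1) A = sInf {n : ℕ | ∃ B C : Finset α, B ⊆ R ∧ C ⊆ R ∧
      B.Nonempty ∧ C.Nonempty ∧ B.card ≤ 2 ^ k ∧ C.card ≤ 2 ^ k ∧
      fitchOp B C = A ∧ n = fCS a R k B + fCS a R k C} := by
  simp [fCS]

lemma fCS_succ_le (a : α) (R : Finset α) (k : ℕ) {A B C : Finset α}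
    (hB : B ⊆ R) (hC : C ⊆ R) (hBne : B.Nonempty) (hCne : C.Nonempty)
    (hBc : B.card ≤ 2 ^ k) (hCc : C.card ≤ 2 ^ k) (hBC : fitchOp B C = A) :
    fCS a R (k+1) A ≤ fCS a R k B + fCS a R k C := by
  rw [fCS_succ]
  exact Nat.sInf_le ⟨B, C, hB, hC, hBne, hCne, hBc, hCc, hBC, rfl⟩

lemma exists_split {A : Finset α} (hne : A.Nonempty) (k : ℕ)
    (hAc : A.card ≤ 2 ^ (k+1)) :
    ∃ B C : Finset α, B ⊆ A ∧ C ⊆ A ∧ B.Nonempty ∧ C.Nonempty ∧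
      B.card ≤ 2 ^ k ∧ C.card ≤ 2 ^ k ∧ fitchOp B C = A := by
  have hpow : (2:ℕ) ^ (k+1) = 2 ^ k + 2 ^ k := by ring
  have hpos : 0 < 2 ^ k := Nat.pow_pos (by norm_num)
  by_cases h : A.card ≤ 2 ^ k
  · exact ⟨A, A, subset_rfl, subset_rfl, hne, hne, h, h, fitchOp_self hne⟩
  · push_neg at h
    obtain ⟨B, hBA, hBcard⟩ := Finset.exists_subset_card_eq h.le
    have hint : B ∩ (A \ B) = ∅ := by
      ext x; simp only [mem_inter, mem_sdiff, Finset.notMem_empty, iff_false]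
      tauto
    refine ⟨B, A \ B, hBA, sdiff_subset, ?_, ?_, le_of_eq hBcard, ?_, ?_⟩
    · rw [← Finset.card_pos, hBcard]; exact hpos
    · rw [← Finset.card_pos, card_sdiff_of_subset hBA, hBcard]; omega
    · rw [card_sdiff_of_subset hBA, hBcard]; omega
    · rw [fitchOp_of_inter_empty hint, Finset.union_sdiff_of_subset hBA]

lemma fCS_succ_attained (a : α) (R : Finset α) (k : ℕ) {A : Finset α}
    (hA : A ⊆ R) (hne : A.Nonempty) (hAc : A.card ≤ 2 ^ (k+1)) :
    ∃ B C : Finset α, B ⊆ R ∧ C ⊆ R ∧ B.Nonempty ∧ C.Nonempty ∧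
      B.card ≤ 2 ^ k ∧ C.card ≤ 2 ^ k ∧ fitchOp B C = A ∧
      fCS a R (k+1) A = fCS a R k B + fCS a R k C := by
  obtain ⟨B, C, hBA, hCA, hBne, hCne, hBc, hCc, hBC⟩ := exists_split hne k hAc
  have hmem : ({n : ℕ | ∃ B C : Finset α, B ⊆ R ∧ C ⊆ R ∧
      B.Nonempty ∧ C.Nonempty ∧ B.card ≤ 2 ^ k ∧ C.card ≤ 2 ^ k ∧
      fitchOp B C = A ∧ n = fCS a R k B + fCS a R k C} : Set ℕ).Nonempty :=
    ⟨_, B, C, hBA.trans hA, hCA.trans hA, hBne, hCne, hBc, hCc, hBC, rfl⟩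
  have h := Nat.sInf_mem hmem
  rw [fCS_succ]
  obtain ⟨B', C', h1, h2, h3, h4, h5, h6, h7, h8⟩ := h
  exact ⟨B', C', h1, h2, h3, h4, h5, h6, h7, h8⟩

lemma fCS_big (a : α) (R : Finset α) (k : ℕ) {A : Finset α}
    (h : 2 ^ (k+1) < A.card) : fCS a R (k+1) A = 0 := by
  rw [fCS_succ]
  convert Nat.sInf_empty
  rw [Set.eq_empty_iff_forall_notMem]
  rintro n ⟨B, C, -, -, -, -, hBc, hCc, hBC, -⟩
  have h1 : A.card ≤ B.card + C.card := by
    calc A.card ≤ (B ∪ C).card := by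
          rw [← hBC]; exact card_le_card (fitchOp_subset_union B C)
      _ ≤ _ := card_union_le B C
  have h2 : (2:ℕ) ^ (k+1) = 2 ^ k + 2 ^ k := by ring
  omega

lemma fCS_of_not_mem (a : α) (R : Finset α) :
    ∀ k (X : Finset α), X ⊆ R → X.Nonempty → a ∉ X → fCS a R k X = 0
  | 0, X, _, _, ha => by simp [fCS, ha]
  | (k+1), X, hXR, hne, ha => by
    by_cases hc : X.card ≤ 2 ^ (k+1)
    · obtain ⟨B, C, hBA, hCA, hBne, hCne, hBc, hCc, hBC⟩ := exists_split hne k hc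
      have hB0 := fCS_of_not_mem a R k B (hBA.trans hXR) hBne (fun h => ha (hBA h))
      have hC0 := fCS_of_not_mem a R k C (hCA.trans hXR) hCne (fun h => ha (hCA h))
      have hle := fCS_succ_le a R k (hBA.trans hXR) (hCA.trans hXR) hBne hCne hBc hCc hBC
      omega
    · exact fCS_big a R k (by omega)

/-- Subadditivity property at level `k`. -/
def Subadd (a : α) (R : Finset α) (k : ℕ) : Prop :=
  ∀ B C : Finset α, B ⊆ R → C ⊆ R → B.Nonempty → C.Nonempty →
    B.card ≤ 2 ^ k → C.card ≤ 2 ^ k →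
    fCS a R k (fitchOp B C) ≤ fCS a R k B + fCS a R k C

lemma mono_of_subadd {a : α} {R : Finset α} {k : ℕ} (hsub : Subadd a R k)
    {A : Finset α} (hA : A ⊆ R) (hne : A.Nonempty) (hAc : A.card ≤ 2 ^ k) :
    fCS a R k A ≤ fCS a R (k+1) A := by
  have h2 : A.card ≤ 2 ^ (k+1) := by
    have : (2:ℕ) ^ k ≤ 2 ^ (k+1) := Nat.pow_le_pow_right (by norm_num) (Nat.le_succ k)
    omega
  obtain ⟨B, C, h1', h2', h3, h4, h5, h6, h7, h8⟩ := fCS_succ_attained a R k hA hne h2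
  rw [h8, ← h7]
  exact hsub B C h1' h2' h3 h4 h5 h6

lemma pad {a : α} {R : Finset α} {k : ℕ} (hsub : Subadd a R k)
    {D A : Finset α} (hA : A ⊆ R) (hDA : D ⊆ A) (haD : a ∈ D)
    (hE : (A \ D).Nonempty) (hDc : D.card ≤ 2 ^ k) (hAc : A.card ≤ 2 ^ (k+1)) :
    fCS a R (k+1) A ≤ fCS a R k D := by
  have hpow : (2:ℕ) ^ (k+1) = 2 ^ k + 2 ^ k := by ring
  have hDR : D ⊆ R := hDA.trans hA
  have hDne : D.Nonempty := ⟨a, haD⟩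
  have hnaAD : a ∉ A \ D := fun h => (mem_sdiff.mp h).2 haD
  by_cases h : A.card ≤ 2 ^ k
  · have h0 : fCS a R k (A \ D) = 0 :=
      fCS_of_not_mem a R k _ (sdiff_subset.trans hA) hE hnaAD
    have hop : fitchOp D (A \ D) = A := by
      rw [fitchOp_of_inter_empty (by ext x; simp only [mem_inter, mem_sdiff,
        Finset.notMem_empty, iff_false]; tauto), Finset.union_sdiff_of_subset hDA]
    have := fCS_succ_le a R k hDR (sdiff_subset.trans hA) hDne hE hDc
      ((card_le_card sdiff_subset).trans h) hop
    omega
  · push_neg at h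
    have hcard : 2 ^ k - D.card ≤ (A \ D).card := by
      rw [card_sdiff_of_subset hDA]; omega
    obtain ⟨E1, hE1sub, hE1card⟩ := Finset.exists_subset_card_eq hcard
    have hE1A : E1 ⊆ A \ D := hE1sub
    have hdisj : Disjoint D E1 := by
      rw [Finset.disjoint_left]
      intro x hxD hxE1
      exact (mem_sdiff.mp (hE1A hxE1)).2 hxD
    set P := D ∪ E1 with hP
    have hPsubA : P ⊆ A := union_subset hDA (hE1A.trans sdiff_subset)
    have hPcardEq : P.card = 2 ^ k := by
      rw [hP, card_union_of_disjoint hdisj, hE1card]; omega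
    have haP : a ∈ P := mem_union_left _ haD
    have hPne : P.Nonempty := ⟨a, haP⟩
    have hE2ne : (A \ P).Nonempty := by
      rw [← card_pos, card_sdiff_of_subset hPsubA, hPcardEq]; omega
    have hE2c : (A \ P).card ≤ 2 ^ k := by
      rw [card_sdiff_of_subset hPsubA, hPcardEq]; omega
    have hfP : fCS a R k P ≤ fCS a R k D := by
      rcases E1.eq_empty_or_nonempty with hE1e | hE1ne
      · simp [hP, hE1e]
      · have h0 : fCS a R k E1 = 0 :=
          fCS_of_not_mem a R k E1 (hE1A.trans (sdiff_subset.trans hA)) hE1ne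
            (fun hmem => (mem_sdiff.mp (hE1A hmem)).2 haD)
        have hop : fitchOp D E1 = P := by
          rw [fitchOp_of_inter_empty (Finset.disjoint_iff_inter_eq_empty.mp hdisj)]
        have := hsub D E1 hDR (hE1A.trans (sdiff_subset.trans hA)) hDne hE1ne hDc
          (by omega)
        rw [hop] at this
        omega
    have hopA : fitchOp P (A \ P) = A := by
      rw [fitchOp_of_inter_empty (by ext x; simp only [mem_inter, mem_sdiff,
        Finset.notMem_empty, iff_false]; tauto), Finset.union_sdiff_of_subset hPsubA]
    have := fCS_succ_le a R k (hPsubA.trans hA) (sdiff_subset.trans hA) hPne hE2ne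
      (le_of_eq hPcardEq) hE2c hopA
    have h0 : fCS a R k (A \ P) = 0 :=
      fCS_of_not_mem a R k _ (sdiff_subset.trans hA) hE2ne
        (fun hmem => (mem_sdiff.mp hmem).2 haP)
    omega

lemma core {a : α} {R : Finset α} {k : ℕ} (hsub : Subadd a R k)
    {B : Finset α} (hB : B ⊆ R) (haB : a ∈ B) (hBc : B.card ≤ 2 ^ (k+1)) :
    ∃ D : Finset α, D ⊆ B ∧ a ∈ D ∧ D.card ≤ 2 ^ k ∧
      fCS a R k D ≤ fCS a R (k+1) B := by
  by_cases h : B.card ≤ 2 ^ k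
  · exact ⟨B, subset_rfl, haB, h, mono_of_subadd hsub hB ⟨a, haB⟩ h⟩
  · push_neg at h
    obtain ⟨B1, B2, h1, h2, h3, h4, h5, h6, h7, h8⟩ :=
      fCS_succ_attained a R k hB ⟨a, haB⟩ hBc
    have hunion : B = B1 ∪ B2 := by
      by_cases hint : (B1 ∩ B2).Nonempty
      · exfalso
        have : B = B1 ∩ B2 := by rw [← h7]; simp [fitchOp, hint]
        have : B.card ≤ B1.card := this ▸ card_le_card inter_subset_left
        omega
      · rw [← h7]; simp [fitchOp, hint]
    have hmem : a ∈ B1 ∨ a ∈ B2 := by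
      rw [hunion, mem_union] at haB; exact haB
    rcases hmem with hx | hx
    · exact ⟨B1, by rw [hunion]; exact subset_union_left, hx, h5, by omega⟩
    · exact ⟨B2, by rw [hunion]; exact subset_union_right, hx, h6, by omega⟩

lemma step_union {a : α} {R : Finset α} {k : ℕ} (ih : Subadd a R k)
    {B C : Finset α} (hB : B ⊆ R) (hC : C ⊆ R) (hCne : C.Nonempty)
    (hBc : B.card ≤ 2 ^ (k+1)) (hdisj : B ∩ C = ∅) (haB : a ∈ B)
    (hbig : (B ∪ C).card ≤ 2 ^ (k+1)) :
    fCS a R (k+1) (B ∪ C) ≤ fCS a R (k+1) B + fCS a R (k+1) C := by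
  obtain ⟨D, hD1, hD2, hD3, hD4⟩ := core ih hB haB hBc
  have hAR : B ∪ C ⊆ R := union_subset hB hC
  have hDsubA : D ⊆ B ∪ C := hD1.trans subset_union_left
  have hADne : ((B ∪ C) \ D).Nonempty := by
    obtain ⟨c, hc⟩ := hCne
    refine ⟨c, mem_sdiff.mpr ⟨mem_union_right _ hc, fun hcD => ?_⟩⟩
    have hcB : c ∈ B := hD1 hcD
    have : c ∈ B ∩ C := mem_inter.mpr ⟨hcB, hc⟩
    simp [hdisj] at this
  have := pad ih hAR hDsubA hD2 hADne hD3 hbig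
  omega

lemma subadd (a : α) (R : Finset α) : ∀ k, Subadd a R k
  | 0 => by
    intro B C hB hC hBne hCne hBc hCc
    simp only [fCS]
    have hsub := fitchOp_subset_union B C
    by_cases ha : a ∈ fitchOp B C
    · have h := hsub ha
      rw [mem_union] at h
      rcases h with h | h <;> simp only [ha, h, if_true] <;> omega
    · simp [ha]
  | (k+1) => by
    have ih := subadd a R k
    intro B C hB hC hBne hCne hBc hCc
    have hAR : fitchOp B C ⊆ R := (fitchOp_subset_union B C).trans (union_subset hB hC)
    have hAne : (fitchOp B C).Nonempty := by
      unfold fitchOp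
      split
      · assumption
      · exact hBne.mono subset_union_left
    by_cases hbig : 2 ^ (k+1) < (fitchOp B C).card
    · rw [fCS_big a R k hbig]
      exact Nat.zero_le _
    · push_neg at hbig
      by_cases haA : a ∈ fitchOp B C
      · by_cases hint : (B ∩ C).Nonempty
        · -- intersection case
          have hAeq : fitchOp B C = B ∩ C := by simp [fitchOp, hint]
          have haBC : a ∈ B ∩ C := hAeq ▸ haA
          have haB : a ∈ B := (mem_inter.mp haBC).1
          have haC : a ∈ C := (mem_inter.mp haBC).2
          obtain ⟨DB, hDB1, hDB2, hDB3, hDB4⟩ := core ih hB haB hBc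
          obtain ⟨DC, hDC1, hDC2, hDC3, hDC4⟩ := core ih hC haC hCc
          have haD : a ∈ DB ∩ DC := mem_inter.mpr ⟨hDB2, hDC2⟩
          have hDop : fitchOp DB DC = DB ∩ DC := by
            unfold fitchOp; rw [if_pos ⟨a, haD⟩]
          have hDsubA : DB ∩ DC ⊆ fitchOp B C := by
            rw [hAeq]; exact inter_subset_inter hDB1 hDC1
          have hfD : fCS a R k (DB ∩ DC) ≤ fCS a R k DB + fCS a R k DC := by
            have := ih DB DC (hDB1.trans hB) (hDC1.trans hC) ⟨a, hDB2⟩ ⟨a, hDC2⟩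
              hDB3 hDC3
            rwa [hDop] at this
          rcases (fitchOp B C \ (DB ∩ DC)).eq_empty_or_nonempty with hAD | hAD
          · have hsubAD : fitchOp B C ⊆ DB ∩ DC :=
              Finset.sdiff_eq_empty_iff_subset.mp hAD
            have hADeq : fitchOp B C = DB ∩ DC := subset_antisymm hsubAD hDsubA
            have := fCS_succ_le a R k (hDB1.trans hB) (hDC1.trans hC)
              ⟨a, hDB2⟩ ⟨a, hDC2⟩ hDB3 hDC3 (hDop.trans hADeq.symm)
            omega
          · have hDcard : (DB ∩ DC).card ≤ 2 ^ k :=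
              le_trans (card_le_card inter_subset_left) hDB3
            have := pad ih hAR hDsubA haD hAD hDcard hbig
            omega
        · -- union case
          have hie : B ∩ C = ∅ := not_nonempty_iff_eq_empty.mp hint
          have hAeq : fitchOp B C = B ∪ C := fitchOp_of_inter_empty hie
          rw [hAeq] at haA hbig ⊢
          rw [mem_union] at haA
          rcases haA with haB | haC
          · exact step_union ih hB hC hCne hBc hie haB hbig
          · have hie' : C ∩ B = ∅ := by rwa [inter_comm]
            rw [union_comm] at hbig ⊢
            have := step_union ih hC hB hBne hCc hie' haC hbig
            omega
      · rw [fCS_of_not_mem a R (k+1) _ hAR hAne haA]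
        exact Nat.zero_le _

end FitchAux

/-- monotonicity in the tree height. -/
theorem stmt_4 {α : Type*} [DecidableEq α] (a : α) (R : Finset α)
    (hr : 2 ≤ R.card) (haR : a ∈ R) (k : ℕ) (A : Finset α)
    (hA : A ⊆ R) (haA : a ∈ A) (hAk : A.card ≤ 2 ^ k) :
    fCS a R k A ≤ fCS a R (k + 1) A :=
  FitchAux.mono_of_subadd (FitchAux.subadd a R k) hA ⟨a, haA⟩ hAk
end

section
/- Key inequality behind the reduction theorem: for all k ≥ 1, all i with 2 ≤ i ≤ r, every i-element set A_i ⊆ R containing a, every (i−1)-element set A_{i-1} ⊆ R containing a, and all disjoint sets S, Ŝ ⊆ R \ A_i with |S| + |Ŝ| ≤ r − i, it holds that f_{k,r}^{A_{i-1}} ≤ f_{k,r}^{A_i ∪ S} + f_{k,r}^{A_i ∪ Ŝ}. -/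
open Finset

noncomputable def Hf (r : ℕ) : ℕ → ℕ
  | 0 => 1
  | (d+1) => sInf {n : ℕ | ∃ x y : ℕ, x + y + 1 = r ∧ n = Hf r (d - x) + Hf r (d - y)}
termination_by d => d
decreasing_by all_goals omega

lemma Hf_succ (r d : ℕ) : Hf r (d+1) = sInf {n : ℕ | ∃ x y : ℕ, x + y + 1 = r ∧ n = Hf r (d - x) + Hf r (d - y)} := by
  rw [Hf]

lemma Hf_set_nonempty (r d : ℕ) (hr : 1 ≤ r) :
    {n : ℕ | ∃ x y : ℕ, x + y + 1 = r ∧ n = Hf r (d - x) + Hf r (d - y)}.Nonempty :=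
  ⟨_, ⟨r - 1, 0, by omega, rfl⟩⟩

lemma Hf_pos (r : ℕ) (hr : 1 ≤ r) : ∀ d, 1 ≤ Hf r d := by
  intro d
  induction d using Nat.strong_induction_on with
  | _ d ih =>
    match d with
    | 0 => simp [Hf]
    | (e+1) =>
      rw [Hf_succ]
      obtain ⟨x, y, hxy, heq⟩ := Nat.sInf_mem (Hf_set_nonempty r e hr)
      rw [heq]
      have := ih (e - x) (by omega)
      omega

lemma Hf_le (r d x y : ℕ) (hxy : x + y + 1 = r) :
    Hf r (d+1) ≤ Hf r (d - x) + Hf r (d - y) := by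
  rw [Hf_succ]
  exact Nat.sInf_le ⟨x, y, hxy, rfl⟩

lemma Hf_step (r : ℕ) (hr : 1 ≤ r) : ∀ d, Hf r d ≤ Hf r (d+1) := by
  intro d
  induction d using Nat.strong_induction_on with
  | _ d ih =>
    match d with
    | 0 => simpa [Hf] using Hf_pos r hr 1
    | (e+1) =>
      obtain ⟨x, y, hxy, heq⟩ := Nat.sInf_mem (Hf_set_nonempty r (e+1) hr)
      rw [Hf_succ (r := r) (d := e+1), heq]
      have h1 : Hf r (e - x) ≤ Hf r (e + 1 - x) := by
        rcases le_or_gt x e with h | h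
        · have := ih (e - x) (by omega)
          have heq2 : e + 1 - x = (e - x) + 1 := by omega
          rwa [heq2]
        · have heq2 : e - x = 0 := by omega
          have heq3 : e + 1 - x ≤ 1 := by omega
          rcases Nat.le_one_iff_eq_zero_or_eq_one.mp heq3 with h' | h' <;> rw [heq2, h']
          exact ih 0 (by omega)
      have h2 : Hf r (e - y) ≤ Hf r (e + 1 - y) := by
        rcases le_or_gt y e with h | h
        · have := ih (e - y) (by omega)
          have heq2 : e + 1 - y = (e - y) + 1 := by omega
          rwa [heq2]
        · have heq2 : e - y = 0 := by omega
          have heq3 : e + 1 - y ≤ 1 := by omega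
          rcases Nat.le_one_iff_eq_zero_or_eq_one.mp heq3 with h' | h' <;> rw [heq2, h']
          exact ih 0 (by omega)
      calc Hf r (e+1) ≤ Hf r (e - x) + Hf r (e - y) := Hf_le r e x y hxy
        _ ≤ Hf r (e + 1 - x) + Hf r (e + 1 - y) := Nat.add_le_add h1 h2

lemma Hf_mono (r : ℕ) (hr : 1 ≤ r) {i j : ℕ} (h : i ≤ j) : Hf r i ≤ Hf r j :=
  monotone_nat_of_le_succ (Hf_step r hr) h

lemma Hf_le' (r d x y : ℕ) (hr : 1 ≤ r) (hxy : x + y + 1 ≤ r) :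
    Hf r (d+1) ≤ Hf r (d - x) + Hf r (d - y) := by
  calc Hf r (d+1) ≤ Hf r (d - x) + Hf r (d - (r - 1 - x)) := Hf_le r d x (r-1-x) (by omega)
    _ ≤ Hf r (d - x) + Hf r (d - y) :=
        Nat.add_le_add_left (Hf_mono r hr (by omega)) _

lemma Hf_exists_min (r d : ℕ) (hr : 1 ≤ r) :
    ∃ x y : ℕ, x ≤ d ∧ y ≤ d ∧ x + y + 1 ≤ r ∧ Hf r (d+1) = Hf r (d - x) + Hf r (d - y) := by
  obtain ⟨x, y, hxy, heq⟩ := Nat.sInf_mem (Hf_set_nonempty r d hr)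
  refine ⟨min x d, min y d, Nat.min_le_right _ _, Nat.min_le_right _ _, by omega, ?_⟩
  rw [Hf_succ, heq]
  congr 1 <;> congr 1 <;> omega

lemma fCS_succ {α : Type*} [DecidableEq α] (a : α) (R : Finset α) (k : ℕ) (A : Finset α) :
    fCS a R (k+1) A = sInf {n : ℕ | ∃ B C : Finset α, B ⊆ R ∧ C ⊆ R ∧
      B.Nonempty ∧ C.Nonempty ∧ B.card ≤ 2 ^ k ∧ C.card ≤ 2 ^ k ∧
      fitchOp B C = A ∧ n = fCS a R k B + fCS a R k C} := rfl


/-- a-free sets have cost 0. -/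
lemma fCS_afree {α : Type*} [DecidableEq α] (a : α) (R : Finset α) :
    ∀ (k : ℕ) (C : Finset α), a ∉ C → C ⊆ R → C.Nonempty → C.card ≤ 2 ^ k →
      fCS a R k C = 0 := by
  intro k
  induction k with
  | zero => intro C ha _ _ _; simp [fCS, ha]
  | succ k ih =>
    intro C ha hCR hCne hCcard
    rw [fCS_succ]
    apply Nat.sInf_eq_zero.mpr
    left
    by_cases h1 : C.card = 1
    · refine ⟨C, C, hCR, hCR, hCne, hCne, by omega, by omega, ?_, ?_⟩
      · simp [fitchOp, inter_self, hCne]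
      · rw [ih C ha hCR hCne (by omega)]
    · have h2 : 2 ≤ C.card := by
        have := Finset.card_pos.mpr hCne; omega
      set q : ℕ := max 1 (C.card - 2 ^ k) with hq
      have hqle : q ≤ C.card := by
        have : 1 ≤ 2 ^ k := Nat.one_le_two_pow
        omega
      obtain ⟨C₁, hC₁sub, hC₁card⟩ := Finset.exists_subset_card_eq hqle
      have hC₂card : (C \ C₁).card = C.card - q := by
        rw [Finset.card_sdiff_of_subset hC₁sub, hC₁card]
      have h2k : 1 ≤ 2 ^ k := Nat.one_le_two_pow
      refine ⟨C₁, C \ C₁, hC₁sub.trans hCR, (sdiff_subset).trans hCR, ?_, ?_, ?_, ?_, ?_, ?_⟩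
      · rw [← Finset.card_pos, hC₁card]; omega
      · rw [← Finset.card_pos, hC₂card]; omega
      · rw [hC₁card]
        have : C.card ≤ 2 ^ (k+1) := hCcard
        have : 2 ^ (k+1) = 2 ^ k + 2 ^ k := by ring
        omega
      · rw [hC₂card]; omega
      · have hint : C₁ ∩ (C \ C₁) = ∅ := by
          rw [Finset.inter_sdiff_self]
        rw [fitchOp, hint]
        simp only [Finset.not_nonempty_empty, if_false]
        exact Finset.union_sdiff_of_subset hC₁sub
      · rw [ih C₁ (fun h => ha (hC₁sub h)) (hC₁sub.trans hCR)
            (by rw [← Finset.card_pos, hC₁card]; omega) (by rw [hC₁card]; omega),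
          ih (C \ C₁) (fun h => ha ((sdiff_subset) h)) ((sdiff_subset).trans hCR)
            (by rw [← Finset.card_pos, hC₂card]; omega) (by rw [hC₂card]; omega)]

lemma fCS_char {α : Type*} [DecidableEq α] (a : α) (R : Finset α) (hr : 2 ≤ R.card) :
    ∀ (k : ℕ) (A : Finset α), a ∈ A → A ⊆ R → A.card ≤ 2 ^ k →
      fCS a R k A = Hf R.card (k + 1 - A.card) := by
  intro k
  induction k with
  | zero =>
    intro A haA hAR hAcard
    have h1 : A.card = 1 := le_antisymm hAcard (Finset.card_pos.mpr ⟨a, haA⟩)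
    rw [h1]
    simp [fCS, haA, Hf]
  | succ k ih =>
    intro A haA hAR hAcard
    have hr1 : 1 ≤ R.card := by omega
    have haR : a ∈ R := hAR haA
    have hj1 : 1 ≤ A.card := Finset.card_pos.mpr ⟨a, haA⟩
    have hjr : A.card ≤ R.card := Finset.card_le_card hAR
    have hk2 : k + 1 ≤ 2 ^ k := Nat.lt_two_pow_self
    have hpow : 2 ^ (k+1) = 2 ^ k + 2 ^ k := by ring
    rw [fCS_succ]
    apply IsLeast.csInf_eq
    constructor
    · -- membership: the value is achieved by an explicit decomposition
      by_cases hj : A.card = 1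
      · -- A = {a}
        have hA : A = {a} := by
          obtain ⟨x, hx⟩ := Finset.card_eq_one.mp hj
          rw [hx] at haA ⊢
          rw [Finset.mem_singleton.mp haA]
        obtain ⟨x, y, hxk, hyk, hxyr, hmin⟩ := Hf_exists_min R.card k hr1
        have herase : (R.erase a).card = R.card - 1 := Finset.card_erase_of_mem haR
        obtain ⟨Z, hZsub, hZcard⟩ := Finset.exists_subset_card_eq
          (show x + y ≤ (R.erase a).card by omega)
        obtain ⟨X, hXsub, hXcard⟩ := Finset.exists_subset_card_eq
          (show x ≤ Z.card by omega)
        set Y := Z \ X with hY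
        have hYcard : Y.card = y := by
          rw [hY, Finset.card_sdiff_of_subset hXsub, hXcard, hZcard]; omega
        have haX : a ∉ X := fun h => Finset.notMem_erase a R (hZsub (hXsub h))
        have haY : a ∉ Y := fun h => Finset.notMem_erase a R (hZsub (Finset.sdiff_subset h))
        have hXY : X ∩ Y = ∅ := Finset.inter_sdiff_self X Z
        set B := insert a X with hB
        set C := insert a Y with hC
        have hBcard : B.card = x + 1 := by rw [hB, Finset.card_insert_of_notMem haX, hXcard]
        have hCcard : C.card = y + 1 := by rw [hC, Finset.card_insert_of_notMem haY, hYcard]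
        have hBR : B ⊆ R := Finset.insert_subset haR
          (hXsub.trans (hZsub.trans (Finset.erase_subset a R)))
        have hCR : C ⊆ R := Finset.insert_subset haR
          ((Finset.sdiff_subset).trans (hZsub.trans (Finset.erase_subset a R)))
        have hBC : B ∩ C = {a} := by
          ext u
          simp only [hB, hC, Finset.mem_inter, Finset.mem_insert, Finset.mem_singleton]
          constructor
          · rintro ⟨h1 | h1, h2 | h2⟩
            · exact h1
            · exact h1
            · exact h2
            · exfalso
              have : u ∈ X ∩ Y := Finset.mem_inter.mpr ⟨h1, h2⟩
              rw [hXY] at this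
              exact Finset.notMem_empty u this
          · rintro rfl; exact ⟨Or.inl rfl, Or.inl rfl⟩
        refine ⟨B, C, hBR, hCR, ⟨a, Finset.mem_insert_self a X⟩, ⟨a, Finset.mem_insert_self a Y⟩,
          by omega, by omega, ?_, ?_⟩
        · rw [fitchOp, if_pos (by rw [hBC]; exact ⟨a, Finset.mem_singleton_self a⟩), hBC, hA]
        · rw [ih B (Finset.mem_insert_self a X) hBR (by omega),
            ih C (Finset.mem_insert_self a Y) hCR (by omega), hBcard, hCcard]
          have e0 : k + 1 + 1 - A.card = k + 1 := by omega
          have e1 : k + 1 - (x + 1) = k - x := by omega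
          have e2 : k + 1 - (y + 1) = k - y := by omega
          rw [e0, e1, e2, hmin]
      · by_cases hj2 : A.card - 1 ≤ 2 ^ k
        · -- erase one non-a element
          obtain ⟨c, hcA, hca⟩ := Finset.exists_mem_ne (show 1 < A.card by omega) a
          set B := A.erase c with hB
          have haB : a ∈ B := Finset.mem_erase.mpr ⟨Ne.symm hca, haA⟩
          have hBcard : B.card = A.card - 1 := Finset.card_erase_of_mem hcA
          have hBR : B ⊆ R := (Finset.erase_subset c A).trans hAR
          have hBle : B.card ≤ 2 ^ k := by rw [hBcard]; omega
          have hCle : ({c} : Finset α).card ≤ 2 ^ k := by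
            rw [Finset.card_singleton]; omega
          refine ⟨B, {c}, hBR, Finset.singleton_subset_iff.mpr (hAR hcA), ⟨a, haB⟩,
            ⟨c, Finset.mem_singleton_self c⟩, hBle, hCle, ?_, ?_⟩
          · rw [fitchOp, if_neg (by
              rw [Finset.inter_singleton_of_notMem (Finset.notMem_erase c A)]
              exact Finset.not_nonempty_empty)]
            rw [Finset.union_comm, ← Finset.insert_eq, Finset.insert_erase hcA]
          · rw [ih B haB hBR (by omega),
              fCS_afree a R k {c} (by simpa using Ne.symm hca)
                (Finset.singleton_subset_iff.mpr (hAR hcA)) ⟨c, Finset.mem_singleton_self c⟩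
                (by omega), hBcard]
            have e1 : k + 1 - (A.card - 1) = k + 1 + 1 - A.card := by omega
            rw [e1]
            omega
        · -- A.card large: cost is 1
          have hjge : A.card ≥ 2 ^ k + 2 := by omega
          have hjk : A.card ≥ k + 3 := by omega
          set m := max (k+1) (A.card - 2 ^ k) with hm
          have hm2k : m ≤ 2 ^ k := by omega
          have hmj : m + 1 ≤ A.card := by omega
          have herase : (A.erase a).card = A.card - 1 := Finset.card_erase_of_mem haA
          obtain ⟨B', hB'sub, hB'card⟩ := Finset.exists_subset_card_eq
            (show m - 1 ≤ (A.erase a).card by omega)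
          have haB' : a ∉ B' := fun h => Finset.notMem_erase a A (hB'sub h)
          set B := insert a B' with hB
          have hBcard : B.card = m := by
            rw [hB, Finset.card_insert_of_notMem haB', hB'card]; omega
          have hBA : B ⊆ A := Finset.insert_subset haA (hB'sub.trans (Finset.erase_subset a A))
          have hBR : B ⊆ R := hBA.trans hAR
          set C := A \ B with hC
          have hCcard : C.card = A.card - m := by rw [hC, Finset.card_sdiff_of_subset hBA, hBcard]
          have haC : a ∉ C := fun h => (Finset.mem_sdiff.mp h).2 (Finset.mem_insert_self a B')
          have hCR : C ⊆ R := (Finset.sdiff_subset).trans hAR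
          have hCne : C.Nonempty := Finset.card_pos.mp (by omega)
          have hBle : B.card ≤ 2 ^ k := by rw [hBcard]; omega
          have hCle : C.card ≤ 2 ^ k := by rw [hCcard]; omega
          refine ⟨B, C, hBR, hCR, ⟨a, Finset.mem_insert_self a B'⟩, hCne,
            hBle, hCle, ?_, ?_⟩
          · rw [fitchOp, if_neg (by
              rw [Finset.inter_sdiff_self B A]
              exact Finset.not_nonempty_empty)]
            exact Finset.union_sdiff_of_subset hBA
          · rw [ih B (Finset.mem_insert_self a B') hBR (by omega),
              fCS_afree a R k C haC hCR hCne (by omega), hBcard]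
            have e1 : k + 1 + 1 - A.card = 0 := by omega
            have e2 : k + 1 - m = 0 := by omega
            rw [e1, e2]
            exact (Nat.add_zero _).symm
    · -- lower bound
      rintro n ⟨B, C, hBR, hCR, hBne, hCne, hBc, hCc, hop, rfl⟩
      rw [fitchOp] at hop
      by_cases hint : (B ∩ C).Nonempty
      · rw [if_pos hint] at hop
        have haBC : a ∈ B ∩ C := hop ▸ haA
        have haB : a ∈ B := (Finset.mem_inter.mp haBC).1
        have haC : a ∈ C := (Finset.mem_inter.mp haBC).2
        have hAB : A ⊆ B := hop ▸ Finset.inter_subset_left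
        have hAC : A ⊆ C := hop ▸ Finset.inter_subset_right
        have hb : A.card ≤ B.card := Finset.card_le_card hAB
        have hc : A.card ≤ C.card := Finset.card_le_card hAC
        have hbc : B.card + C.card ≤ R.card + A.card := by
          have h1 : (B ∩ C).card + (B ∪ C).card = B.card + C.card :=
            Finset.card_inter_add_card_union B C
          have h2 : (B ∪ C).card ≤ R.card :=
            Finset.card_le_card (Finset.union_subset hBR hCR)
          rw [hop] at h1
          omega
        rw [ih B haB hBR hBc, ih C haC hCR hCc]
        rcases le_or_gt A.card (k+1) with hcase | hcase
        · have e1 : k + 1 + 1 - A.card = (k + 1 - A.card) + 1 := by omega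
          have e2 : k + 1 - B.card = (k + 1 - A.card) - (B.card - A.card) := by omega
          have e3 : k + 1 - C.card = (k + 1 - A.card) - (C.card - A.card) := by omega
          rw [e1, e2, e3]
          exact Hf_le' R.card (k + 1 - A.card) _ _ hr1 (by omega)
        · have e1 : k + 1 + 1 - A.card = 0 := by omega
          rw [e1]
          have h1 := Hf_pos R.card hr1 (k + 1 - B.card)
          have h2 : Hf R.card 0 = 1 := by simp [Hf]
          omega
      · rw [if_neg hint] at hop
        have hBC : B ∩ C = ∅ := Finset.not_nonempty_iff_eq_empty.mp hint
        have hsum : B.card + C.card = A.card := by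
          rw [← hop]
          exact (Finset.card_union_of_disjoint
            (Finset.disjoint_iff_inter_eq_empty.mpr hBC)).symm
        have hBpos : 1 ≤ B.card := Finset.card_pos.mpr hBne
        have hCpos : 1 ≤ C.card := Finset.card_pos.mpr hCne
        have haBC : a ∈ B ∪ C := hop ▸ haA
        rcases Finset.mem_union.mp haBC with haB | haC
        · rw [ih B haB hBR hBc]
          calc Hf R.card (k + 1 + 1 - A.card) ≤ Hf R.card (k + 1 - B.card) :=
                Hf_mono R.card hr1 (by omega)
            _ ≤ Hf R.card (k + 1 - B.card) + fCS a R k C := Nat.le_add_right _ _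
        · rw [ih C haC hCR hCc]
          calc Hf R.card (k + 1 + 1 - A.card) ≤ Hf R.card (k + 1 - C.card) :=
                Hf_mono R.card hr1 (by omega)
            _ ≤ fCS a R k B + Hf R.card (k + 1 - C.card) := Nat.le_add_left _ _

/-- STATEMENT 6 marker -/

theorem stmt_6 {α : Type*} [DecidableEq α] (a : α) (R : Finset α)
    (hr : 2 ≤ R.card) (haR : a ∈ R) (k i : ℕ) (hk : 1 ≤ k)
    (hi2 : 2 ≤ i) (hir : i ≤ R.card)
    (Ai Am S T : Finset α) (hAi : Ai ⊆ R) (haAi : a ∈ Ai) (hAicard : Ai.card = i)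
    (hAm : Am ⊆ R) (haAm : a ∈ Am) (hAmcard : Am.card = i - 1)
    (hS : S ⊆ R \ Ai) (hT : T ⊆ R \ Ai) (hST : Disjoint S T)
    (hSTcard : S.card + T.card ≤ R.card - i)
    (hdefS : (Ai ∪ S).card ≤ 2 ^ k) (hdefT : (Ai ∪ T).card ≤ 2 ^ k)
    (hdefm : i - 1 ≤ 2 ^ k) :
    fCS a R k Am ≤ fCS a R k (Ai ∪ S) + fCS a R k (Ai ∪ T) := by
  have hr1 : 1 ≤ R.card := by omega
  have hSR : S ⊆ R := hS.trans Finset.sdiff_subset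
  have hTR : T ⊆ R := hT.trans Finset.sdiff_subset
  have hdisjS : Disjoint Ai S := by
    rw [Finset.disjoint_right]
    intro x hx
    exact (Finset.mem_sdiff.mp (hS hx)).2
  have hdisjT : Disjoint Ai T := by
    rw [Finset.disjoint_right]
    intro x hx
    exact (Finset.mem_sdiff.mp (hT hx)).2
  have hUScard : (Ai ∪ S).card = i + S.card := by
    rw [Finset.card_union_of_disjoint hdisjS, hAicard]
  have hUTcard : (Ai ∪ T).card = i + T.card := by
    rw [Finset.card_union_of_disjoint hdisjT, hAicard]
  have h1 := fCS_char a R hr k Am haAm hAm (by rw [hAmcard]; exact hdefm)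
  have h2 := fCS_char a R hr k (Ai ∪ S) (Finset.mem_union_left S haAi)
    (Finset.union_subset hAi hSR) hdefS
  have h3 := fCS_char a R hr k (Ai ∪ T) (Finset.mem_union_left T haAi)
    (Finset.union_subset hAi hTR) hdefT
  rw [h1, h2, h3, hAmcard, hUScard, hUTcard]
  have hsum : S.card + T.card + i ≤ R.card := by omega
  rcases le_or_gt i (k+1) with hik | hik
  · have e1 : k + 1 - (i - 1) = (k + 1 - i) + 1 := by omega
    have e2 : k + 1 - (i + S.card) = (k + 1 - i) - S.card := by omega
    have e3 : k + 1 - (i + T.card) = (k + 1 - i) - T.card := by omega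
    rw [e1, e2, e3]
    exact Hf_le' R.card (k + 1 - i) S.card T.card hr1 (by omega)
  · have e1 : k + 1 - (i - 1) = 0 := by omega
    rw [e1]
    have hp := Hf_pos R.card hr1 (k + 1 - (i + S.card))
    have h0 : Hf R.card 0 = 1 := by simp [Hf]
    omega
end

section
/- Monotonicity in alphabet size: let R be an alphabet with |R| = r ≥ 2, a ∈ R, let 2 ≤ r̃ ≤ r, and let A_i ⊆ R with a ∈ A_i and |A_i| = i ≤ r̃. Then for all k where both quantities are defined, f_{k+1,r}^{A_i} ≤ f_{k+1,r̃}^{A_i}, where f_{k+1,r̃} is computed with respect to a fixed r̃-element subalphabet of R containing A_i. -/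
open Finset

/-- The decomposition set at level `k+1` is nonempty whenever
`A ⊆ R'` is nonempty with `|A| ≤ 2^(k+1)`. -/
lemma fCS_set_nonempty {α : Type*} [DecidableEq α] (a : α) (R' : Finset α)
    (k : ℕ) (A : Finset α) (hA : A ⊆ R') (hne : A.Nonempty)
    (hcard : A.card ≤ 2 ^ (k + 1)) :
    {n : ℕ | ∃ B C : Finset α, B ⊆ R' ∧ C ⊆ R' ∧
      B.Nonempty ∧ C.Nonempty ∧ B.card ≤ 2 ^ k ∧ C.card ≤ 2 ^ k ∧
      fitchOp B C = A ∧ n = fCS a R' k B + fCS a R' k C}.Nonempty := by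
  by_cases h : A.card ≤ 2 ^ k
  · refine ⟨fCS a R' k A + fCS a R' k A, A, A, hA, hA, hne, hne, h, h, ?_, rfl⟩
    simp [fitchOp, inter_self, hne]
  · push_neg at h
    obtain ⟨B, hBA, hBcard⟩ := Finset.exists_subset_card_eq (s := A) (n := 2^k) (le_of_lt h)
    have hBne : B.Nonempty := by
      rw [← Finset.card_pos, hBcard]; positivity
    have hCne : (A \ B).Nonempty := by
      rw [← Finset.card_pos, Finset.card_sdiff_of_subset hBA, hBcard]
      omega
    have hCcard : (A \ B).card ≤ 2 ^ k := by
      rw [Finset.card_sdiff_of_subset hBA, hBcard]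
      have : 2 ^ (k + 1) = 2 ^ k + 2 ^ k := by ring
      omega
    refine ⟨_, B, A \ B, hBA.trans hA, (Finset.sdiff_subset).trans hA,
      hBne, hCne, le_of_eq hBcard, hCcard, ?_, rfl⟩
    have hint : B ∩ (A \ B) = ∅ := by
      ext x; simp (config := {contextual := true}) [Finset.mem_sdiff]
    rw [fitchOp, hint]
    simp [Finset.union_sdiff_of_subset hBA]

lemma fCS_mono {α : Type*} [DecidableEq α] (a : α) (R R' : Finset α)
    (hsub : R' ⊆ R) :
    ∀ k (A : Finset α), A ⊆ R' → A.Nonempty → A.card ≤ 2 ^ k →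
      fCS a R k A ≤ fCS a R' k A := by
  intro k
  induction k with
  | zero => intro A _ _ _; simp [fCS]
  | succ k ih =>
    intro A hA hne hcard
    have hS' := fCS_set_nonempty a R' k A hA hne hcard
    have hmem := Nat.sInf_mem hS'
    obtain ⟨B, C, hBR', hCR', hBne, hCne, hBc, hCc, hop, heq⟩ := hmem
    have hR' : fCS a R' (k + 1) A = fCS a R' k B + fCS a R' k C := by
      rw [fCS]; exact heq
    show fCS a R (k + 1) A ≤ fCS a R' (k + 1) A
    rw [fCS, hR']
    calc sInf {n : ℕ | ∃ B C : Finset α, B ⊆ R ∧ C ⊆ R ∧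
          B.Nonempty ∧ C.Nonempty ∧ B.card ≤ 2 ^ k ∧ C.card ≤ 2 ^ k ∧
          fitchOp B C = A ∧ n = fCS a R k B + fCS a R k C}
        ≤ fCS a R k B + fCS a R k C := by
          apply Nat.sInf_le
          exact ⟨B, C, hBR'.trans hsub, hCR'.trans hsub, hBne, hCne, hBc, hCc,
            hop, rfl⟩
      _ ≤ fCS a R' k B + fCS a R' k C :=
          Nat.add_le_add (ih B hBR' hBne hBc) (ih C hCR' hCne hCc)

/-- monotonicity in the alphabet size: computing with a smaller
subalphabet cannot decrease the required number of leaves in state a. -/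
theorem stmt_7 {α : Type*} [DecidableEq α] (a : α) (R R' : Finset α)
    (hr : 2 ≤ R.card) (hr' : 2 ≤ R'.card) (hsub : R' ⊆ R) (haR' : a ∈ R')
    (k i : ℕ) (Ai : Finset α) (hAi : Ai ⊆ R') (haAi : a ∈ Ai)
    (hAicard : Ai.card = i) (hir : i ≤ R'.card) (hdef : i ≤ 2 ^ (k + 1)) :
    fCS a R (k + 1) Ai ≤ fCS a R' (k + 1) Ai :=
  fCS_mono a R R' hsub (k + 1) Ai hAi ⟨a, haAi⟩ (hAicard ▸ hdef)
end

section
/- Construction bound for odd alphabets (upper direction of the counterexample): for p ≥ 2 and r = 2p − 1, one can achieve f_{p+1,r}^{{a}} ≤ 3; i.e., there exists a character on the 2^{p+1} leaves of T_{p+1} that assigns state a to exactly 3 leaves and whose Fitch root set equals {a}. -/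
open Finset

/-- Fitch bottom-up set computation on the fully bifurcating tree of height k,
whose leaves are indexed by Fin k → Bool. -/
def fitchRoot {α : Type*} [DecidableEq α] :
    (k : ℕ) → ((Fin k → Bool) → α) → Finset α
  | 0, χ => {χ (fun i => i.elim0)}
  | (k+1), χ =>
      fitchOp (fitchRoot k (fun v => χ (Fin.cons false v)))
              (fitchRoot k (fun v => χ (Fin.cons true v)))

set_option linter.unusedSectionVars false

section Aux
variable {α : Type*} [DecidableEq α]

def chainChar (g : ℕ → α) : (k : ℕ) → (Fin k → Bool) → α
  | 0, _ => g 0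
  | (k+1), v => if v 0 then g (k+1) else chainChar g k (Fin.tail v)

lemma fitchRoot_const (x : α) : ∀ k, fitchRoot k (fun _ : Fin k → Bool => x) = {x} := by
  intro k
  induction k with
  | zero => simp [fitchRoot]
  | succ k ih => simp [fitchRoot, ih, fitchOp]

lemma chainChar_mem (g : ℕ → α) (R : Finset α) :
    ∀ k, (∀ j ≤ k, g j ∈ R) → ∀ v, chainChar g k v ∈ R := by
  intro k
  induction k with
  | zero => intro h v; exact h 0 le_rfl
  | succ k ih =>
    intro h v
    simp only [chainChar]
    split
    · exact h (k+1) le_rfl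
    · exact ih (fun j hj => h j (hj.trans (Nat.le_succ _))) _

lemma chainChar_cons_false (g : ℕ → α) (k : ℕ) (v : Fin k → Bool) :
    chainChar g (k+1) (Fin.cons false v) = chainChar g k v := by
  simp [chainChar, Fin.tail_cons]

lemma chainChar_cons_true (g : ℕ → α) (k : ℕ) (v : Fin k → Bool) :
    chainChar g (k+1) (Fin.cons true v) = g (k+1) := by
  simp [chainChar]

lemma fitchRoot_chain (g : ℕ → α) :
    ∀ k, (∀ i j, i < j → j ≤ k → g i ≠ g j) →
    fitchRoot k (chainChar g k) = (range (k+1)).image g := by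
  intro k
  induction k with
  | zero => simp [fitchRoot, chainChar]
  | succ k ih =>
    intro h
    have hL : (fun v => chainChar g (k+1) (Fin.cons false v)) = chainChar g k := by
      funext v; exact chainChar_cons_false g k v
    have hRt : (fun v => chainChar g (k+1) (Fin.cons true v))
        = (fun _ : Fin k → Bool => g (k+1)) := by
      funext v; exact chainChar_cons_true g k v
    have hih := ih (fun i j hij hjk => h i j hij (hjk.trans (Nat.le_succ _)))
    simp only [fitchRoot, hL, hRt, hih, fitchRoot_const]
    have hempty : ¬((range (k+1)).image g ∩ {g (k+1)}).Nonempty := by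
      rintro ⟨x, hx⟩
      simp only [mem_inter, mem_image, mem_range, mem_singleton] at hx
      obtain ⟨⟨i, hi, hgi⟩, hx2⟩ := hx
      exact h i (k+1) hi le_rfl (hgi.trans hx2)
    rw [fitchOp, if_neg hempty, union_comm, ← insert_eq, ← image_insert, ← range_add_one]

lemma chainChar_eq_iff (g : ℕ → α) :
    ∀ k, (∀ j, 1 ≤ j → j ≤ k → g j ≠ g 0) → ∀ v,
    (chainChar g k v = g 0 ↔ v = fun _ => false) := by
  intro k
  induction k with
  | zero =>
    intro _ v
    constructor
    · intro _; funext i; exact i.elim0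
    · intro _; rfl
  | succ k ih =>
    intro h v
    rcases Bool.eq_false_or_eq_true (v 0) with h0 | h0
    · have hc : chainChar g (k+1) v = g (k+1) := by simp [chainChar, h0]
      rw [hc]
      constructor
      · intro ht; exact absurd ht (h (k+1) (Nat.succ_le_succ (Nat.zero_le _)) le_rfl)
      · intro hv2
        have := congrFun hv2 0
        rw [h0] at this
        exact absurd this (by simp)
    · have hc : chainChar g (k+1) v = chainChar g k (Fin.tail v) := by
        simp [chainChar, h0]
      rw [hc, ih (fun j h1 hj => h j h1 (hj.trans (Nat.le_succ _))) (Fin.tail v)]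
      constructor
      · intro ht; funext i
        refine Fin.cases ?_ ?_ i
        · exact h0
        · intro j; exact congrFun ht j
      · intro hv2; funext j
        exact congrFun hv2 j.succ

lemma filter_card_cons {k : ℕ} (P : (Fin (k+1) → Bool) → Prop) [DecidablePred P] :
    (univ.filter P).card
      = (univ.filter (fun v => P (Fin.cons false v))).card
      + (univ.filter (fun v => P (Fin.cons true v))).card := by
  set c0 : (Fin k → Bool) → (Fin (k+1) → Bool) := Fin.cons (α := fun _ => Bool) false with hc0
  set c1 : (Fin k → Bool) → (Fin (k+1) → Bool) := Fin.cons (α := fun _ => Bool) true with hc1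
  have hi0 : Function.Injective c0 := Fin.cons_right_injective _
  have hi1 : Function.Injective c1 := Fin.cons_right_injective _
  have hset : (univ.filter P)
      = ((univ.filter (fun v => P (c0 v))).image c0)
      ∪ ((univ.filter (fun v => P (c1 v))).image c1) := by
    ext l
    simp only [mem_union, mem_image, mem_filter, mem_univ, true_and]
    constructor
    · intro hl
      rcases Bool.eq_false_or_eq_true (l 0) with h0 | h0
      · right
        have he : c1 (Fin.tail l) = l := by
          rw [hc1, ← h0]; exact Fin.cons_self_tail l
        exact ⟨Fin.tail l, by rw [he]; exact hl, he⟩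
      · left
        have he : c0 (Fin.tail l) = l := by
          rw [hc0, ← h0]; exact Fin.cons_self_tail l
        exact ⟨Fin.tail l, by rw [he]; exact hl, he⟩
    · rintro (⟨v, hv, rfl⟩ | ⟨v, hv, rfl⟩) <;> exact hv
  have hdisj : Disjoint ((univ.filter (fun v => P (c0 v))).image c0)
      ((univ.filter (fun v => P (c1 v))).image c1) := by
    rw [Finset.disjoint_left]
    rintro x hx hx'
    simp only [mem_image] at hx hx'
    obtain ⟨v, _, rfl⟩ := hx
    obtain ⟨w, _, hw⟩ := hx'
    have := congrFun hw 0
    simp [hc0, hc1] at this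
  rw [hset, card_union_of_disjoint hdisj,
      Finset.card_image_of_injective _ hi0, Finset.card_image_of_injective _ hi1]

lemma chain_count (g : ℕ → α) (k : ℕ) (h : ∀ j, 1 ≤ j → j ≤ k → g j ≠ g 0) :
    (univ.filter (fun v : Fin k → Bool => chainChar g k v = g 0)).card = 1 := by
  have : (univ.filter (fun v : Fin k → Bool => chainChar g k v = g 0))
      = {fun _ => false} := by
    ext v
    simp only [mem_filter, mem_univ, true_and, mem_singleton]
    exact chainChar_eq_iff g k h v
  rw [this, card_singleton]

end Aux

section Aux2
variable {α : Type*} [DecidableEq α]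

lemma chain_count' (g : ℕ → α) (k : ℕ) (a : α) (hg0 : g 0 = a)
    (h : ∀ j, 1 ≤ j → j ≤ k → g j ≠ a) :
    (univ.filter (fun v : Fin k → Bool => chainChar g k v = a)).card = 1 := by
  subst hg0
  exact chain_count g k h

lemma fitchRoot_succ (k : ℕ) (χ : (Fin (k+1) → Bool) → α) :
    fitchRoot (k+1) χ = fitchOp (fitchRoot k (fun v => χ (Fin.cons false v)))
      (fitchRoot k (fun v => χ (Fin.cons true v))) := rfl

def cPartChar (g1 g2 : ℕ → α) (q : ℕ) : (Fin (q+2) → Bool) → α :=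
  fun w => if w 0 then chainChar g2 (q+1) (Fin.tail w) else chainChar g1 (q+1) (Fin.tail w)

def bigChar (g1 g2 : ℕ → α) (q : ℕ) : (Fin (q+3) → Bool) → α :=
  fun l => if l 0 then cPartChar g1 g2 q (Fin.tail l) else chainChar g1 (q+2) (Fin.tail l)

end Aux2

/-- construction bound for odd alphabets: for r = 2p - 1, p ≥ 2,
there is a character on the 2^(p+1) leaves of T_{p+1}, with states from R,
assigning a to exactly 3 leaves, whose Fitch root set equals {a}. -/
theorem stmt_11 {α : Type*} [DecidableEq α] (a : α) (R : Finset α)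
    (haR : a ∈ R) (p : ℕ) (hp : 2 ≤ p) (hR : R.card = 2 * p - 1) :
    ∃ χ : (Fin (p + 1) → Bool) → α, (∀ l, χ l ∈ R) ∧
      (Finset.univ.filter (fun l => χ l = a)).card = 3 ∧
      fitchRoot (p + 1) χ = {a} := by
  obtain ⟨q, rfl⟩ : ∃ q, p = q + 2 := ⟨p - 2, by omega⟩
  have hE : (R.erase a).card = 2*q + 2 := by
    rw [card_erase_of_mem haR, hR]; omega
  set F : ℕ → α := fun j => if h : j < (R.erase a).card
    then ((R.erase a).equivFin.symm ⟨j, h⟩ : α) else a with hF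
  have hFmem : ∀ j, j < 2*q+2 → F j ∈ R.erase a := by
    intro j hj
    have hj' : j < (R.erase a).card := by omega
    simp only [hF, dif_pos hj']
    exact Subtype.coe_prop _
  have hFinj : ∀ i j, i < 2*q+2 → j < 2*q+2 → F i = F j → i = j := by
    intro i j hi hj hij
    have hi' : i < (R.erase a).card := by omega
    have hj' : j < (R.erase a).card := by omega
    simp only [hF, dif_pos hi', dif_pos hj'] at hij
    have := (R.erase a).equivFin.symm.injective (Subtype.ext hij)
    exact congrArg Fin.val this
  have hFa : ∀ j, j < 2*q+2 → F j ≠ a := by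
    intro j hj h
    exact (Finset.mem_erase.mp (hFmem j hj)).1 h
  set gB : ℕ → α := fun j => if j = 0 then a else F (j-1) with hgB
  set gC : ℕ → α := fun j => if j = 0 then a else F (q + j) with hgC
  have hgB0 : gB 0 = a := by simp [hgB]
  have hgC0 : gC 0 = a := by simp [hgC]
  have hgBa : ∀ j, 1 ≤ j → j ≤ q+2 → gB j ≠ a := by
    intro j h1 hj h
    simp only [hgB, if_neg (by omega : ¬ j = 0)] at h
    exact hFa (j-1) (by omega) h
  have hgCa : ∀ j, 1 ≤ j → j ≤ q+1 → gC j ≠ a := by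
    intro j h1 hj h
    simp only [hgC, if_neg (by omega : ¬ j = 0)] at h
    exact hFa (q+j) (by omega) h
  have hgBinj : ∀ i j, i < j → j ≤ q+2 → gB i ≠ gB j := by
    intro i j hij hj h
    rcases Nat.eq_zero_or_pos i with hi0 | hi0
    · subst hi0
      rw [hgB0] at h
      exact hgBa j (by omega) hj h.symm
    · simp only [hgB, if_neg (by omega : ¬ i = 0), if_neg (by omega : ¬ j = 0)] at h
      have := hFinj _ _ (by omega) (by omega) h
      omega
  have hgCinj : ∀ i j, i < j → j ≤ q+1 → gC i ≠ gC j := by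
    intro i j hij hj h
    rcases Nat.eq_zero_or_pos i with hi0 | hi0
    · subst hi0
      rw [hgC0] at h
      exact hgCa j (by omega) hj h.symm
    · simp only [hgC, if_neg (by omega : ¬ i = 0), if_neg (by omega : ¬ j = 0)] at h
      have := hFinj _ _ (by omega) (by omega) h
      omega
  have hgBR : ∀ j, j ≤ q+2 → gB j ∈ R := by
    intro j hj
    rcases Nat.eq_zero_or_pos j with h0 | h0
    · subst h0; rwa [hgB0]
    · simp only [hgB, if_neg (by omega : ¬ j = 0)]
      exact Finset.erase_subset _ _ (hFmem (j-1) (by omega))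
  have hgCR : ∀ j, j ≤ q+1 → gC j ∈ R := by
    intro j hj
    rcases Nat.eq_zero_or_pos j with h0 | h0
    · subst h0; rwa [hgC0]
    · simp only [hgC, if_neg (by omega : ¬ j = 0)]
      exact Finset.erase_subset _ _ (hFmem (q+j) (by omega))
  have hB : (fun v : Fin (q+2) → Bool => bigChar gB gC q (Fin.cons false v))
      = chainChar gB (q+2) := by
    funext v; simp [bigChar]
  have hC : (fun v : Fin (q+2) → Bool => bigChar gB gC q (Fin.cons true v))
      = cPartChar gB gC q := by
    funext v; simp [bigChar]
  have hC0 : (fun v : Fin (q+1) → Bool => cPartChar gB gC q (Fin.cons false v))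
      = chainChar gB (q+1) := by
    funext v; simp [cPartChar]
  have hC1 : (fun v : Fin (q+1) → Bool => cPartChar gB gC q (Fin.cons true v))
      = chainChar gC (q+1) := by
    funext v; simp [cPartChar]
  refine ⟨bigChar gB gC q, ?_, ?_, ?_⟩
  · -- membership
    intro l
    unfold bigChar cPartChar
    split
    · split
      · exact chainChar_mem gC R (q+1) hgCR _
      · exact chainChar_mem gB R (q+1) (fun j hj => hgBR j (by omega)) _
    · exact chainChar_mem gB R (q+2) hgBR _
  · -- count
    rw [filter_card_cons (fun l => bigChar gB gC q l = a)]
    simp only [congrFun hB, congrFun hC]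
    rw [filter_card_cons (fun w => cPartChar gB gC q w = a)]
    simp only [congrFun hC0, congrFun hC1]
    rw [chain_count' gB (q+2) a hgB0 hgBa,
        chain_count' gB (q+1) a hgB0 (fun j h1 hj => hgBa j h1 (by omega)),
        chain_count' gC (q+1) a hgC0 hgCa]
  · -- root
    have e3 : fitchRoot (q+2+1) (bigChar gB gC q)
        = fitchOp (fitchRoot (q+2) (fun v => bigChar gB gC q (Fin.cons false v)))
            (fitchRoot (q+2) (fun v => bigChar gB gC q (Fin.cons true v))) := rfl
    have e2 : fitchRoot (q+2) (cPartChar gB gC q)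
        = fitchOp (fitchRoot (q+1) (fun v => cPartChar gB gC q (Fin.cons false v)))
            (fitchRoot (q+1) (fun v => cPartChar gB gC q (Fin.cons true v))) := rfl
    rw [e3, hB, hC, e2, hC0, hC1,
        fitchRoot_chain gB (q+2) hgBinj,
        fitchRoot_chain gB (q+1) (fun i j hij hj => hgBinj i j hij (by omega)),
        fitchRoot_chain gC (q+1) hgCinj]
    have hint : (range (q+2)).image gB ∩ (range (q+2)).image gC = {a} := by
      ext x
      simp only [mem_inter, mem_image, mem_range, mem_singleton]
      constructor
      · rintro ⟨⟨i, hi, rfl⟩, ⟨j, hj, hij⟩⟩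
        by_cases hi0 : i = 0
        · subst hi0; exact hgB0
        by_cases hj0 : j = 0
        · subst hj0; rw [← hij, hgC0]
        · exfalso
          have h1 : gB i = F (i-1) := by simp [hgB, hi0]
          have h2 : gC j = F (q+j) := by simp [hgC, hj0]
          rw [h1, h2] at hij
          have := hFinj _ _ (by omega) (by omega) hij
          omega
      · rintro rfl
        exact ⟨⟨0, by omega, hgB0⟩, ⟨0, by omega, hgC0⟩⟩
    have hmid : fitchOp ((range (q+2)).image gB) ((range (q+2)).image gC) = {a} := by
      rw [fitchOp, if_pos (by rw [hint]; exact singleton_nonempty a), hint]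
    rw [hmid]
    have ha : a ∈ (range (q+2+1)).image gB :=
      mem_image.mpr ⟨0, mem_range.mpr (by omega), hgB0⟩
    rw [fitchOp, if_pos ⟨a, mem_inter.mpr ⟨ha, mem_singleton_self a⟩⟩,
        Finset.inter_singleton_of_mem ha]
end
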